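/- Let p₁ ≠ p₂ be distinct primes and let B ⊆ ℤ_{p₁} be a ball. For n ∈ ℕ, let φ^B(n) = #{a ∈ ℕ : 1 ≤ a ≤ n, gcd(a,n) = 1, and a/n ∈ B as an element of ℚ_{p₁}}. Then there exist N₀ ∈ ℕ and a constant C > 0 such that for all N ≥ N₀, Σ_{1 ≤ n ≤ N, p₂ ∤ n} φ^B(n) ≥ C·N². -/

import Mathlib

/-- `φ^B(n)`: the number of `a` with `1 ≤ a ≤ n`, `gcd(a,n) = 1`, such that `a/n`,
viewed in `ℚ_[p₁]`, lies in the ball of radius `p₁^{-k}` centered at `c ∈ ℤ_[p₁]`. -/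
noncomputable def phiB (p₁ : ℕ) [Fact p₁.Prime] (k : ℕ) (c : ℤ_[p₁]) (n : ℕ) : ℕ :=
  Set.ncard {a : ℕ | 1 ≤ a ∧ a ≤ n ∧ Nat.Coprime a n ∧
    ‖((a : ℚ_[p₁]) / (n : ℚ_[p₁])) - (c : ℚ_[p₁])‖ < (p₁ : ℝ) ^ (-(k : ℤ))}

/-!
Put `q = p₁^(k+1)` and `r = c.appr (k+1)`. If `n ≡ 1` and `a ≡ r` modulo `q`, then
`‖a/n - c‖ ≤ p₁^(-(k+1))`, so `a/n` lies in the ball. Count the pairs `(n, a)` with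
`M < n ≤ 2M`, `n ≡ 1 [MOD q p₂]` (so `p₂ ∤ n`) and `0 < a ≤ M`, `a ≡ r [MOD q]`: they form a
product of two residue classes, of size about `M²/(q² p₂)`. A pair with `gcd(a, n) = g ≥ 2` has
`g` prime to `q p₂`, so it lies in the sub-box of multiples of `g`, which is a product of residue
classes modulo `g q p₂` and `g q`; summing over `g` these cover at most `Σ_{g ≥ 2} g⁻² ≤ 11/12`
of the main term, up to an error `O(M log M)`. Taking `M = N/2` gives `≫ N²` coprime pairs, each
counted by `φ^B(n)` for some `n ≤ N` with `p₂ ∤ n`.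
-/

open Finset Filter Asymptotics

theorem PadicInt.norm_natCast_div_sub_appr_lt {p : ℕ} [Fact p.Prime] {k a n : ℕ} (c : ℤ_[p])
    (hn : n ≡ 1 [MOD p ^ (k + 1)]) (ha : a ≡ c.appr (k + 1) [MOD p ^ (k + 1)]) :
    ‖(a : ℚ_[p]) / n - c‖ < (p : ℝ) ^ (-(k : ℤ)) := by
  have hn_unit : ‖(n : ℚ_[p])‖ = 1 := by
    rw [Padic.norm_natCast_eq_one_iff, Nat.coprime_comm, Nat.Coprime,
      (hn.of_dvd (dvd_pow_self p k.succ_ne_zero)).gcd_eq, Nat.gcd_one_left]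
  have hker : (a - c * n : ℤ_[p]) ∈ RingHom.ker (PadicInt.toZModPow (k + 1)) := by
    rw [RingHom.mem_ker, map_sub, map_mul, map_natCast, map_natCast,
      (ZMod.natCast_eq_natCast_iff _ _ _).2 hn, (ZMod.natCast_eq_natCast_iff _ _ _).2 ha]
    simp [PadicInt.toZModPow, PadicInt.toZModHom]
  rw [PadicInt.ker_toZModPow, ← PadicInt.norm_le_pow_iff_mem_span_pow] at hker
  have hne : (n : ℚ_[p]) ≠ 0 := norm_ne_zero_iff.1 (by rw [hn_unit]; exact one_ne_zero)
  have hp : (1 : ℝ) < p := by exact_mod_cast (Fact.out : p.Prime).one_lt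
  calc ‖(a : ℚ_[p]) / n - c‖ = ‖(a - c * n : ℤ_[p])‖ := by
        rw [div_sub' hne, norm_div, hn_unit, div_one, PadicInt.norm_def]
        push_cast
        ring_nf
    _ < _ := hker.trans_lt (zpow_lt_zpow_right₀ hp (by omega))

def modEqIoc (m v a L : ℕ) : Finset ℕ := {x ∈ Ioc a (a + L) | x ≡ v [MOD m]}

lemma abs_card_modEqIoc_sub_le {m : ℕ} (hm : 0 < m) (v a L : ℕ) :
    |(#(modEqIoc m v a L) : ℝ) - L / m| ≤ 1 := by
  have hcard := Nat.Ioc_filter_modEq_card a (a + L) hm v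
  set X : ℚ := ((a : ℚ) - v) / m
  have hY : (((a + L : ℕ) : ℚ) - v) / m = X + L / m := by push_cast; ring
  have hmono : ⌊X⌋ ≤ ⌊X + L / m⌋ := Int.floor_mono (le_add_of_nonneg_right (by positivity))
  rw [hY, max_eq_left (sub_nonneg.2 hmono)] at hcard
  have hcardℚ : (#(modEqIoc m v a L) : ℚ) = ⌊X + L / m⌋ - ⌊X⌋ := by exact_mod_cast hcard
  have := Int.floor_le (X + L / m)
  have := Int.lt_floor_add_one (X + L / m)
  have := Int.floor_le X
  have := Int.lt_floor_add_one X
  have hℚ : |(#(modEqIoc m v a L) : ℚ) - L / m| ≤ 1 := abs_le.2 ⟨by linarith, by linarith⟩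
  simpa using (Rat.cast_le (K := ℝ)).2 hℚ

lemma card_le_of_subset_Ioc_of_modEq {m : ℕ} (hm : 0 < m) {a L : ℕ} {s : Finset ℕ}
    (hs : s ⊆ Ioc a (a + L)) (hmod : ∀ x ∈ s, ∀ y ∈ s, x ≡ y [MOD m]) :
    (#s : ℝ) ≤ L / m + 1 := by
  rcases s.eq_empty_or_nonempty with rfl | ⟨x₀, hx₀⟩
  · simp only [card_empty, CharP.cast_eq_zero]
    positivity
  · have hsub : s ⊆ modEqIoc m x₀ a L := fun x hx => mem_filter.2 ⟨hs hx, hmod x hx x₀ hx₀⟩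
    have hcard : (#s : ℝ) ≤ #(modEqIoc m x₀ a L) := by exact_mod_cast card_le_card hsub
    linarith [(abs_le.1 (abs_card_modEqIoc_sub_le hm x₀ a L)).2]

lemma card_filter_dvd_modEqIoc_le {m g : ℕ} (hm : 0 < m) (hg : 0 < g) (hgm : g.Coprime m)
    (v a L : ℕ) : (#{x ∈ modEqIoc m v a L | g ∣ x} : ℝ) ≤ (L / m : ℝ) / g + 1 := by
  rw [div_div, mul_comm, ← Nat.cast_mul]
  refine card_le_of_subset_Ioc_of_modEq (a := a) (Nat.mul_pos hg hm) (fun x hx => ?_)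
    fun x hx y hy => ?_
  · exact (mem_filter.1 (mem_filter.1 hx).1).1
  · simp only [modEqIoc, mem_filter] at hx hy
    exact (Nat.modEq_and_modEq_iff_modEq_mul hgm).1
      ⟨(Nat.modEq_zero_iff_dvd.2 hx.2).trans (Nat.modEq_zero_iff_dvd.2 hy.2).symm,
        hx.1.2.trans hy.1.2.symm⟩

lemma sum_Icc_two_inv_sq_le (M : ℕ) : ∑ g ∈ Icc 2 M, ((g : ℝ) ^ 2)⁻¹ ≤ 11 / 12 := by
  have hsub : Icc 2 M ⊆ insert 2 (Ioo 2 (M + 1)) := fun g hg => by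
    simp only [mem_Icc, mem_insert, mem_Ioo] at hg ⊢
    omega
  have htail := sum_Ioo_inv_sq_le (α := ℝ) 2 (M + 1)
  calc ∑ g ∈ Icc 2 M, ((g : ℝ) ^ 2)⁻¹ ≤ ∑ g ∈ insert 2 (Ioo 2 (M + 1)), ((g : ℝ) ^ 2)⁻¹ :=
        sum_le_sum_of_subset_of_nonneg hsub fun _ _ _ => by positivity
    _ ≤ 11 / 12 := by
        rw [sum_insert (by simp)]
        norm_num at htail ⊢
        linarith

lemma sum_Icc_two_div_add_one_mul_le {x y : ℝ} (hx : 0 ≤ x) (hy : 0 ≤ y) (M : ℕ) :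
    ∑ g ∈ Icc 2 M, (x / g + 1) * (y / g + 1)
      ≤ 11 / 12 * (x * y) + (x + y) * (1 + Real.log M) + M := by
  have hexpand : ∀ g ∈ Icc 2 M, (x / g + 1) * (y / g + 1)
      = x * y * ((g : ℝ) ^ 2)⁻¹ + (x + y) * (g : ℝ)⁻¹ + 1 := fun g hg => by
    have : (g : ℝ) ≠ 0 := by have := (mem_Icc.1 hg).1; positivity
    field_simp
    ring
  have hharmonic : ∑ g ∈ Icc 2 M, (g : ℝ)⁻¹ ≤ 1 + Real.log M := by
    refine (sum_le_sum_of_subset_of_nonneg (Icc_subset_Icc_left one_le_two)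
      fun _ _ _ => by positivity).trans ?_
    simpa [harmonic_eq_sum_Icc] using harmonic_le_one_add_log M
  have hcard : (#(Icc 2 M) : ℝ) ≤ M := by
    exact_mod_cast (card_le_card (Icc_subset_Icc_left one_le_two)).trans_eq (Nat.card_Icc 1 M)
  rw [sum_congr rfl hexpand, sum_add_distrib, sum_add_distrib, ← mul_sum, ← mul_sum, sum_const,
    nsmul_one]
  linarith [mul_le_mul_of_nonneg_left (sum_Icc_two_inv_sq_le M) (mul_nonneg hx hy),
    mul_le_mul_of_nonneg_left hharmonic (add_nonneg hx hy)]

lemma eventually_mul_five_add_two_log_le {ε : ℝ} (hε : 0 < ε) :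
    ∀ᶠ M : ℕ in atTop, (M : ℝ) * (5 + 2 * Real.log M) ≤ ε * (M : ℝ) ^ 2 := by
  have hlog : (fun x : ℝ => 5 + 2 * Real.log x) =o[atTop] id :=
    (isLittleO_const_id_atTop 5).add (Real.isLittleO_log_id_atTop.const_mul_left 2)
  filter_upwards [tendsto_natCast_atTop_atTop.eventually (hlog.bound hε)] with M hM
  have hM : 5 + 2 * Real.log M ≤ ε * M := by
    simpa [abs_of_nonneg (Real.log_natCast_nonneg M)] using (le_abs_self _).trans hM
  nlinarith [(M.cast_nonneg : (0 : ℝ) ≤ M)]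

section PairBox

variable (P q r M : ℕ)

/-- A product set inside `{(n, a) | 0 < a < n}`, so that its size is the product of two
residue-class counts. -/
def pairBox : Finset (ℕ × ℕ) := modEqIoc P 1 M M ×ˢ modEqIoc q r 0 M

variable {P q}

lemma card_pairBox_ge (hP : 0 < P) (hq : 0 < q) :
    (M : ℝ) ^ 2 / (P * q) - 2 * M ≤ #(pairBox P q r M) := by
  have hn := (abs_le.1 (abs_card_modEqIoc_sub_le hP 1 M M)).1
  have ha := (abs_le.1 (abs_card_modEqIoc_sub_le hq r 0 M)).1
  set u : ℝ := M / P
  set v : ℝ := M / q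
  have hu : u ≤ M := div_le_self M.cast_nonneg (by exact_mod_cast hP)
  have hv : v ≤ M := div_le_self M.cast_nonneg (by exact_mod_cast hq)
  have hv0 : 0 ≤ v := by positivity
  have hX := (#(modEqIoc P 1 M M)).cast_nonneg (α := ℝ)
  have hY := (#(modEqIoc q r 0 M)).cast_nonneg (α := ℝ)
  rw [pairBox, card_product, Nat.cast_mul, show (M : ℝ) ^ 2 / (P * q) = u * v by ring]
  rcases le_or_gt 1 u with hu1 | hu1 <;> rcases le_or_gt 1 v with hv1 | hv1
  · nlinarith [mul_le_mul (a := u - 1) (by linarith) (by linarith : v - 1 ≤ _) (by linarith) hX]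
  all_goals nlinarith

lemma card_filter_not_coprime_pairBox_le (hP : 0 < P) (hqP : q ∣ P) :
    (#{x ∈ pairBox P q r M | ¬ x.2.Coprime x.1} : ℝ)
      ≤ ∑ g ∈ Icc 2 M, ((M / P : ℝ) / g + 1) * ((M / q : ℝ) / g + 1) := by
  have hq : 0 < q := Nat.pos_of_dvd_of_pos hqP hP
  set layer : ℕ → Finset (ℕ × ℕ) := fun g =>
    {n ∈ modEqIoc P 1 M M | g ∣ n} ×ˢ {a ∈ modEqIoc q r 0 M | g ∣ a}
  have hcover : {x ∈ pairBox P q r M | ¬ x.2.Coprime x.1} ⊆ (Icc 2 M).biUnion layer := by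
    rintro ⟨n, a⟩ h
    simp only [pairBox, modEqIoc, mem_filter, mem_product, mem_Ioc] at h
    obtain ⟨⟨⟨hn, hn1⟩, ⟨ha, har⟩⟩, hcop⟩ := h
    have hg0 : 0 < a.gcd n := Nat.gcd_pos_of_pos_left _ ha.1
    have hg1 : a.gcd n ≠ 1 := hcop
    have hgM : a.gcd n ≤ M := (Nat.gcd_le_left n ha.1).trans (by omega)
    refine mem_biUnion.2 ⟨a.gcd n, mem_Icc.2 ⟨by omega, hgM⟩, ?_⟩
    simp only [layer, modEqIoc, mem_product, mem_filter, mem_Ioc]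
    exact ⟨⟨⟨hn, hn1⟩, Nat.gcd_dvd_right a n⟩, ⟨⟨ha, har⟩, Nat.gcd_dvd_left a n⟩⟩
  have hlayer : ∀ g ∈ Icc 2 M,
      (#(layer g) : ℝ) ≤ ((M / P : ℝ) / g + 1) * ((M / q : ℝ) / g + 1) := by
    intro g hg
    have hg0 : 0 < g := by have := (mem_Icc.1 hg).1; omega
    rw [card_product, Nat.cast_mul]
    by_cases hgP : g.Coprime P
    · exact mul_le_mul (card_filter_dvd_modEqIoc_le hP hg0 hgP 1 M M)
        (card_filter_dvd_modEqIoc_le hq hg0 (hgP.coprime_dvd_right hqP) r 0 M)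
        (by positivity) (by positivity)
    · have hempty : {n ∈ modEqIoc P 1 M M | g ∣ n} = ∅ :=
        filter_eq_empty_iff.2 fun n hn hgn => hgP <| Nat.Coprime.coprime_dvd_left hgn <|
          Nat.coprime_of_mul_modEq_one 1 (by rw [mul_one]; exact (mem_filter.1 hn).2)
      rw [hempty, card_empty, Nat.cast_zero, zero_mul]
      positivity
  calc (#{x ∈ pairBox P q r M | ¬ x.2.Coprime x.1} : ℝ) ≤ #((Icc 2 M).biUnion layer) := by
        exact_mod_cast card_le_card hcover
    _ ≤ ∑ g ∈ Icc 2 M, (#(layer g) : ℝ) := by exact_mod_cast card_biUnion_le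
    _ ≤ _ := sum_le_sum hlayer

lemma card_filter_coprime_pairBox_ge (hP : 0 < P) (hqP : q ∣ P) :
    (M : ℝ) ^ 2 / (12 * (P * q)) - M * (5 + 2 * Real.log M)
      ≤ #{x ∈ pairBox P q r M | x.2.Coprime x.1} := by
  have hq : 0 < q := Nat.pos_of_dvd_of_pos hqP hP
  have hsplit : (#{x ∈ pairBox P q r M | x.2.Coprime x.1} : ℝ)
      + #{x ∈ pairBox P q r M | ¬ x.2.Coprime x.1} = #(pairBox P q r M) := by
    exact_mod_cast card_filter_add_card_filter_not (s := pairBox P q r M) fun x => x.2.Coprime x.1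
  have hbox := card_pairBox_ge r M hP hq
  have hbad := (card_filter_not_coprime_pairBox_le r M hP hqP).trans
    (sum_Icc_two_div_add_one_mul_le (by positivity) (by positivity) M)
  have hMP : (M : ℝ) / P ≤ M := div_le_self M.cast_nonneg (by exact_mod_cast hP)
  have hMq : (M : ℝ) / q ≤ M := div_le_self M.cast_nonneg (by exact_mod_cast hq)
  have hlog : (0 : ℝ) ≤ 1 + Real.log M := by linarith [Real.log_natCast_nonneg M]
  have hmain : (M : ℝ) ^ 2 / (P * q) = M / P * (M / q) := by ring
  have hmain' : (M : ℝ) ^ 2 / (12 * (P * q)) = M / P * (M / q) / 12 := by ring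
  linarith [mul_le_mul_of_nonneg_right (add_le_add hMP hMq) hlog]

lemma eventually_card_filter_coprime_pairBox_ge (hP : 0 < P) (hqP : q ∣ P) :
    ∀ᶠ M : ℕ in atTop, (M : ℝ) ^ 2 / (24 * (P * q)) ≤ #{x ∈ pairBox P q r M | x.2.Coprime x.1} := by
  have hq : 0 < q := Nat.pos_of_dvd_of_pos hqP hP
  filter_upwards [eventually_mul_five_add_two_log_le (ε := 1 / (24 * (P * q))) (by positivity)]
    with M hM
  have h12 : (M : ℝ) ^ 2 / (12 * (P * q)) = 2 * (1 / (24 * (P * q)) * M ^ 2) := by ring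
  have h24 : (M : ℝ) ^ 2 / (24 * (P * q)) = 1 / (24 * (P * q)) * M ^ 2 := by ring
  linarith [card_filter_coprime_pairBox_ge r M hP hqP]

end PairBox

lemma card_filter_coprime_pairBox_le_sum_phiB {p₁ p₂ : ℕ} [Fact p₁.Prime] [hp₂ : Fact p₂.Prime]
    (k : ℕ) (c : ℤ_[p₁]) {M N : ℕ} (hMN : 2 * M ≤ N) :
    (#{x ∈ pairBox (p₁ ^ (k + 1) * p₂) (p₁ ^ (k + 1)) (c.appr (k + 1)) M | x.2.Coprime x.1} : ℝ)
      ≤ ∑ n ∈ Icc 1 N, (if p₂ ∣ n then 0 else (phiB p₁ k c n : ℝ)) := by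
  set q := p₁ ^ (k + 1)
  set r := c.appr (k + 1)
  have hfiber : #{x ∈ pairBox (q * p₂) q r M | x.2.Coprime x.1}
      = ∑ n ∈ modEqIoc (q * p₂) 1 M M, #{a ∈ modEqIoc q r 0 M | a.Coprime n} := by
    simp only [pairBox, card_filter, sum_product]
  have hsub : modEqIoc (q * p₂) 1 M M ⊆ Icc 1 N := fun n hn => by
    simp only [modEqIoc, mem_filter, mem_Ioc, mem_Icc] at hn ⊢
    omega
  have hfiber_le : ∀ n ∈ modEqIoc (q * p₂) 1 M M,
      (#{a ∈ modEqIoc q r 0 M | a.Coprime n} : ℝ) ≤ if p₂ ∣ n then 0 else (phiB p₁ k c n : ℝ) := by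
    intro n hn
    simp only [modEqIoc, mem_filter, mem_Ioc] at hn
    obtain ⟨hnM, hn1⟩ := hn
    have hn₂ : ¬ p₂ ∣ n := hp₂.out.coprime_iff_not_dvd.1
      (Nat.coprime_of_mul_modEq_one 1 (by rw [mul_one]; exact hn1.of_mul_left q)).symm
    rw [if_neg hn₂, phiB, ← Set.ncard_coe_finset]
    refine Nat.cast_le.2 (Set.ncard_le_ncard (fun a ha => ?_) ((Set.finite_Icc 1 n).subset
      fun a ha => ⟨ha.1, ha.2.1⟩))
    simp only [modEqIoc, coe_filter, mem_filter, mem_Ioc, Set.mem_ofPred_eq] at ha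
    obtain ⟨⟨ha, har⟩, hcop⟩ := ha
    exact ⟨ha.1, by omega, hcop, PadicInt.norm_natCast_div_sub_appr_lt c (hn1.of_mul_right p₂) har⟩
  calc (#{x ∈ pairBox (q * p₂) q r M | x.2.Coprime x.1} : ℝ)
      = ∑ n ∈ modEqIoc (q * p₂) 1 M M, (#{a ∈ modEqIoc q r 0 M | a.Coprime n} : ℝ) := by
        exact_mod_cast hfiber
    _ ≤ ∑ n ∈ modEqIoc (q * p₂) 1 M M, (if p₂ ∣ n then 0 else (phiB p₁ k c n : ℝ)) :=
        sum_le_sum hfiber_le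
    _ ≤ _ := sum_le_sum_of_subset_of_nonneg hsub fun n _ _ => by positivity

theorem statement17_general (p₁ p₂ : ℕ) [Fact p₁.Prime] [Fact p₂.Prime]
    (k : ℕ) (c : ℤ_[p₁]) :
    ∃ N₀ : ℕ, ∃ C : ℝ, 0 < C ∧ ∀ N ≥ N₀,
      C * (N : ℝ) ^ 2 ≤
        ∑ n ∈ Finset.Icc 1 N, (if p₂ ∣ n then 0 else (phiB p₁ k c n : ℝ)) := by
  set q := p₁ ^ (k + 1)
  set P := q * p₂
  have hP : 0 < P := Nat.mul_pos (pow_pos (Fact.out : p₁.Prime).pos _) (Fact.out : p₂.Prime).pos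
  have hPq : (0 : ℝ) < P * q := by
    exact_mod_cast Nat.mul_pos hP (Nat.pos_of_dvd_of_pos (dvd_mul_right q p₂) hP)
  have hcount := (Nat.tendsto_div_const_atTop two_ne_zero).eventually
    (eventually_card_filter_coprime_pairBox_ge (c.appr (k + 1)) hP (dvd_mul_right q p₂))
  obtain ⟨N₀, hN₀⟩ := eventually_atTop.1 (hcount.and (eventually_ge_atTop 2))
  refine ⟨N₀, 1 / (16 * (24 * (P * q))), one_div_pos.2 (by linarith), fun N hN => ?_⟩
  obtain ⟨hcountN, hN2⟩ := hN₀ N hN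
  have hhalf : (N : ℝ) ≤ 4 * (N / 2 : ℕ) := by exact_mod_cast (by omega : N ≤ 4 * (N / 2))
  calc 1 / (16 * (24 * (P * q))) * (N : ℝ) ^ 2 = (N : ℝ) ^ 2 / 16 / (24 * (P * q)) := by ring
    _ ≤ ((N / 2 : ℕ) : ℝ) ^ 2 / (24 * (P * q)) := by gcongr; nlinarith
    _ ≤ _ := hcountN
    _ ≤ _ := card_filter_coprime_pairBox_le_sum_phiB k c (by omega)

theorem statement17 (p₁ p₂ : ℕ) [Fact p₁.Prime] [Fact p₂.Prime] (hne : p₁ ≠ p₂)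
    (k : ℕ) (c : ℤ_[p₁]) :
    ∃ N₀ : ℕ, ∃ C : ℝ, 0 < C ∧ ∀ N ≥ N₀,
      C * (N : ℝ) ^ 2 ≤
        ∑ n ∈ Finset.Icc 1 N, (if p₂ ∣ n then 0 else (phiB p₁ k c n : ℝ)) :=
  statement17_general p₁ p₂ k c
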